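/- Let E be a real normed vector space with a continuous linear complex structure J₀ (J₀ ∘ J₀ = −id), and let H : ℝ × ℝ × E → ℝ be a differentiable function independent of the first coordinate. Define vector fields on ℝ × ℝ × E by T(p) = ((H(p)+1)/2, −1, 0) and JT(p) = ((H(p)−1)/2, −1, 0), and define the pointwise linear map J_p(a, b, w) = (J_{H(p)}(a,b), J₀ w), where J_s is the endomorphism of ℝ² with J_s(1,0) = (s, −2), J_s(0,1) = ((s²+1)/2, −s). Then for every v ∈ E, with X the constant vector field (0,0,v) and JX the constant vector field (0,0,J₀v), the Nijenhuis combination satisfies [JX, JT] − [X, T] − J([X, JT]) − J([JX, T]) = −(∂_v H)·T − (∂_{J₀v} H)·JT, where J is applied pointwise to vector fields and ∂_w H(p) denotes the derivative of H at p in the direction (0,0,w). -/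

import Mathlib

/-! Since `X` and `JX` are constant, every bracket is a directional derivative of `T` or `JT`,
and both have derivative `(DH/2, 0, 0)`: `[X, T] = [X, JT] = (∂_v H / 2, 0, 0)` and likewise for
`JX` with `∂_{J₀v} H`. The identity is then a pointwise computation with the matrix `J_{H(p)}`. -/

/-- The Lie bracket of two differentiable vector fields `X, Y` on a real
normed vector space `F`: `[X, Y](p) = (DY)_p(X(p)) − (DX)_p(Y(p))`. -/
noncomputable def lieBracketVF {F : Type*} [NormedAddCommGroup F] [NormedSpace ℝ F]
    (X Y : F → F) : F → F :=
  fun p => fderiv ℝ Y p (X p) - fderiv ℝ X p (Y p)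

theorem lieBracketVF_const_left {F : Type*} [NormedAddCommGroup F] [NormedSpace ℝ F]
    (c : F) (Y : F → F) (p : F) :
    lieBracketVF (fun _ => c) Y p = fderiv ℝ Y p c := by
  simp [lieBracketVF]

theorem fderiv_half_add_const_prodMk_const_apply {F E : Type*} [NormedAddCommGroup F]
    [NormedSpace ℝ F] [NormedAddCommGroup E] [NormedSpace ℝ E]
    {f : F → ℝ} {p : F} (hf : DifferentiableAt ℝ f p) (c b : ℝ) (e : E) (w : F) :
    fderiv ℝ (fun q => ((f q + c) / 2, b, e)) p w = (fderiv ℝ f p w / 2, 0, 0) := by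
  have hfst : HasFDerivAt (fun q => (f q + c) / 2) ((2⁻¹ : ℝ) • fderiv ℝ f p) p := by
    simpa only [div_eq_mul_inv] using (hf.hasFDerivAt.add_const c).mul_const (2⁻¹ : ℝ)
  rw [(hfst.prodMk (hasFDerivAt_const (b, e) p)).fderiv]
  simp [div_eq_inv_mul, Prod.mk_zero_zero]

theorem nijenhuis_combination_general {E : Type*} [NormedAddCommGroup E] [NormedSpace ℝ E]
    (J₀ : E →L[ℝ] E)
    (H : ℝ × ℝ × E → ℝ) (hH : Differentiable ℝ H)
    (T JT : ℝ × ℝ × E → ℝ × ℝ × E)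
    (hT : T = fun p => ((H p + 1) / 2, -1, 0))
    (hJT : JT = fun p => ((H p - 1) / 2, -1, 0))
    (J : (ℝ × ℝ × E) → (ℝ × ℝ × E) → (ℝ × ℝ × E))
    (hJ : ∀ (p : ℝ × ℝ × E) (a b : ℝ) (w : E),
      J p (a, b, w) =
        (H p * a + ((H p ^ 2 + 1) / 2) * b, -2 * a - H p * b, J₀ w))
    (v : E) (X JX : ℝ × ℝ × E → ℝ × ℝ × E)
    (hX : X = fun _ => (0, 0, v)) (hJX : JX = fun _ => (0, 0, J₀ v)) :
    (fun p => lieBracketVF JX JT p - lieBracketVF X T p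
        - J p (lieBracketVF X JT p) - J p (lieBracketVF JX T p)) =
      fun p => -(fderiv ℝ H p (0, 0, v)) • T p
        - (fderiv ℝ H p (0, 0, J₀ v)) • JT p := by
  funext p
  have hJT' : JT = fun p => ((H p + -1) / 2, -1, 0) := by simp only [hJT, sub_eq_add_neg]
  subst hT hX hJX
  simp only [hJT', lieBracketVF_const_left,
    fderiv_half_add_const_prodMk_const_apply (hH p), hJ]
  simp only [Prod.mk_sub_mk, Prod.smul_mk, Prod.mk.injEq, smul_eq_mul]
  refine ⟨by ring, by ring, by simp⟩

/-- On `ℝ × ℝ × E`, with the almost-complex structure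
`J_p(a, b, w) = (J_{H(p)}(a,b), J₀ w)` where `J_s(1,0) = (s, −2)` and
`J_s(0,1) = ((s²+1)/2, −s)`, the vector fields `T(p) = ((H(p)+1)/2, −1, 0)`,
`JT(p) = ((H(p)−1)/2, −1, 0)` and the constant vector fields `X ≡ (0,0,v)`,
`JX ≡ (0,0,J₀v)` satisfy the Nijenhuis identity
`[JX, JT] − [X, T] − J([X, JT]) − J([JX, T]) = −(∂_v H)·T − (∂_{J₀v} H)·JT`. -/
theorem nijenhuis_combination {E : Type*} [NormedAddCommGroup E] [NormedSpace ℝ E]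
    (J₀ : E →L[ℝ] E) (hJ₀ : ∀ w : E, J₀ (J₀ w) = -w)
    (H : ℝ × ℝ × E → ℝ) (hH : Differentiable ℝ H)
    (hInd : ∀ (a a' b : ℝ) (e : E), H (a, b, e) = H (a', b, e))
    (T JT : ℝ × ℝ × E → ℝ × ℝ × E)
    (hT : T = fun p => ((H p + 1) / 2, -1, 0))
    (hJT : JT = fun p => ((H p - 1) / 2, -1, 0))
    (J : (ℝ × ℝ × E) → (ℝ × ℝ × E) → (ℝ × ℝ × E))
    (hJ : ∀ (p : ℝ × ℝ × E) (a b : ℝ) (w : E),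
      J p (a, b, w) =
        (H p * a + ((H p ^ 2 + 1) / 2) * b, -2 * a - H p * b, J₀ w))
    (v : E) (X JX : ℝ × ℝ × E → ℝ × ℝ × E)
    (hX : X = fun _ => (0, 0, v)) (hJX : JX = fun _ => (0, 0, J₀ v)) :
    (fun p => lieBracketVF JX JT p - lieBracketVF X T p
        - J p (lieBracketVF X JT p) - J p (lieBracketVF JX T p)) =
      fun p => -(fderiv ℝ H p (0, 0, v)) • T p
        - (fderiv ℝ H p (0, 0, J₀ v)) • JT p :=
  nijenhuis_combination_general J₀ H hH T JT hT hJT J hJ v X JX hX hJX
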